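/- Let 1 < q < ∞ and let F be a dyadic cube, σ, ω locally finite Borel measures, K : D → [0,∞) with finitely many nonzero values. If F belongs to a principal-cube family with σ(F) ≤ 2 σ(E(F)) for a measurable E(F) ⊆ F, then {σ(F)^{-1/p} (∫_F (∑_{Q ⊆ F} K(Q) σ(Q) 1_Q)^q dω)^{1/q}}^r ≤ 2 c(q)^{r/q} ∫_{E(F)} (M_σ W^q_{K,ω}[σ])^{r/q} dσ, where 1/q = 1/r + 1/p, c(q) is the constant from the Cascante–Ortega–Verbitsky lemma, W^q_{K,ω}[σ](x) = ∑_Q K(Q) ω(Q) ((1/ω(Q)) ∑_{Q'⊆Q} K(Q') ω(Q') σ(Q'))^{q-1} 1_Q(x), and M_σ is the dyadic maximal operator with respect to σ. -/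

import Mathlib

open MeasureTheory ENNReal Classical

noncomputable section

def dyadicCube (n : ℕ) (i : ℤ) (k : Fin n → ℤ) : Set (Fin n → ℝ) :=
  {x | ∀ j, (k j : ℝ) * 2 ^ (-i) ≤ x j ∧ x j < ((k j : ℝ) + 1) * 2 ^ (-i)}

def cube (n : ℕ) (P : ℤ × (Fin n → ℤ)) : Set (Fin n → ℝ) := dyadicCube n P.1 P.2

def IsDyadicCube (n : ℕ) (Q : Set (Fin n → ℝ)) : Prop :=
  ∃ i k, Q = dyadicCube n i k

/-- The constant `c(q)` from the Cascante–Ortega–Verbitsky lemma. -/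
def covConst (s : ℝ) : ℝ :=
  if s ≤ 2 then s
  else (∏ j ∈ Finset.range ((⌈s - 2⌉).toNat + 1), (s - j)) ^
    ((s - 1) / (s - (⌈s - 2⌉).toNat - 1))

/-- The dyadic Hardy–Littlewood maximal operator with respect to `σ`. -/
def dyadicMaximal {n : ℕ} (σ : Measure (Fin n → ℝ)) (f : (Fin n → ℝ) → ℝ≥0∞)
    (x : Fin n → ℝ) : ℝ≥0∞ :=
  ⨆ (i : ℤ) (k : Fin n → ℤ) (_ : x ∈ dyadicCube n i k),
    (∫⁻ y in dyadicCube n i k, f y ∂σ) / σ (dyadicCube n i k)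

/-- `W^q_{K,ω}[σ]`, terms with `ω(Q) = 0` vanishing. -/
def wolffPot (n : ℕ) (K : ℤ × (Fin n → ℤ) → ℝ≥0∞) (ω σ : Measure (Fin n → ℝ))
    (q : ℝ) (x : Fin n → ℝ) : ℝ≥0∞ :=
  ∑' P : ℤ × (Fin n → ℤ), (cube n P).indicator
    (fun _ => K P * ω (cube n P) *
      ((∑' P' : ℤ × (Fin n → ℤ),
          if cube n P' ⊆ cube n P then K P' * ω (cube n P') * σ (cube n P') else 0) /
        ω (cube n P)) ^ (q - 1)) x

/-!
Only the finitely many cubes `Q ⊆ F` with `K Q ≠ 0` contribute, so the integral on the left is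
`∫ f ^ q dω` for a finite sum `f = ∑ a_Q 1_Q`, `a_Q = K(Q) σ(Q)`, over a laminar family of cubes.
Along the chain of cubes containing a point, `(∑ b)^q ≤ q ∑_Q b_Q (∑_{Q' ⊆ Q} b_{Q'})^{q-1}`.
Iterating this `k + 1 = ⌈q - 1⌉` times and applying Hölder's inequality inside each cube bounds
`∫ f^q` by a sum of geometric means, with weights `α` and `1 - α`, of the terms of the discrete
Wolff sum `W` and of terms dominated by `∫ f^q`. A discrete Hölder inequality then gives
`∫ f^q ≤ D W^α (∫ f^q)^{1-α}`, i.e. `∫ f^q ≤ D^{1/α} W = c(q) W`, and `W ≤ ∫_F W^q_{K,ω}[σ] dσ`.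
Finally `r (1/q - 1/p) = 1` turns `σ(F)^{-r/p} (c(q) ∫_F W^q_{K,ω}[σ] dσ)^{r/q}` into
`c(q)^{r/q} (⨍_F W^q_{K,ω}[σ] dσ)^{r/q} σ(F)`, and the average is at most `M_σ W^q_{K,ω}[σ]`
at every point of `E ⊆ F`, while `σ(F) ≤ 2 σ(E)`.
-/

lemma Real.add_rpow_le_rpow_add_mul_rpow {x d q : ℝ} (hx : 0 ≤ x) (hd : 0 ≤ d) (hq : 1 ≤ q) :
    (x + d) ^ q ≤ x ^ q + q * d * (x + d) ^ (q - 1) := by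
  rcases (add_nonneg hx hd).eq_or_lt with h0 | hy
  · obtain ⟨rfl, rfl⟩ : x = 0 ∧ d = 0 := ⟨by linarith, by linarith⟩
    simp
  have hs : -1 ≤ -(d / (x + d)) := by
    rw [neg_le_neg_iff, div_le_one hy]; linarith
  -- Bernoulli's inequality at `1 - d / (x + d) = x / (x + d)`
  have hb := one_add_mul_self_le_rpow_one_add hs hq
  rw [show 1 + -(d / (x + d)) = x / (x + d) by field_simp; ring, Real.div_rpow hx hy.le,
    le_div_iff₀ (Real.rpow_pos_of_pos hy q)] at hb
  rw [Real.rpow_sub_one hy.ne']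
  have : (1 + q * -(d / (x + d))) * (x + d) ^ q =
      (x + d) ^ q - q * d * ((x + d) ^ q / (x + d)) := by ring
  linarith

lemma ENNReal.add_rpow_le_rpow_add_mul_rpow {q : ℝ} (hq : 1 ≤ q) (x d : ℝ≥0∞) :
    (x + d) ^ q ≤ x ^ q + ENNReal.ofReal q * d * (x + d) ^ (q - 1) := by
  have hq0 : 0 < q := by linarith
  rcases eq_or_ne x ⊤ with rfl | hx
  · simp [ENNReal.top_rpow_of_pos hq0]
  rcases eq_or_ne d ⊤ with rfl | hd
  · have h1 : (x + ⊤) ^ (q - 1) ≠ 0 := by simpa [ENNReal.rpow_eq_zero_iff] using hq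
    have h2 : ENNReal.ofReal q ≠ 0 := by simpa using hq0
    rw [ENNReal.mul_top h2, ENNReal.top_mul h1]
    exact le_add_left le_top
  lift x to NNReal using hx
  lift d to NNReal using hd
  rw [← ENNReal.coe_add, ← ENNReal.coe_rpow_of_nonneg _ hq0.le,
    ← ENNReal.coe_rpow_of_nonneg _ hq0.le, ← ENNReal.coe_rpow_of_nonneg _ (sub_nonneg.2 hq),
    ENNReal.ofReal, ← coe_mul, ← coe_mul, ← coe_add, coe_le_coe, ← NNReal.coe_le_coe]
  push_cast
  rw [Real.coe_toNNReal _ hq0.le]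
  exact Real.add_rpow_le_rpow_add_mul_rpow x.2 d.2 hq

lemma Finset.exists_forall_le_of_chain {ι α : Type*} [PartialOrder α] (Q : ι → α)
    {s : Finset ι} (hs : s.Nonempty) (hchain : ∀ i ∈ s, ∀ j ∈ s, Q i ≤ Q j ∨ Q j ≤ Q i) :
    ∃ m ∈ s, ∀ j ∈ s, Q j ≤ Q m := by
  obtain ⟨m, hm, hmax⟩ := s.exists_maximalFor Q hs
  exact ⟨m, hm, fun j hj => (hchain j hj m hm).elim id (hmax hj)⟩

theorem ENNReal.rpow_sum_le_of_chain {ι α : Type*} [PartialOrder α] (Q : ι → α) {q : ℝ}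
    (hq : 1 ≤ q) (b : ι → ℝ≥0∞) (s : Finset ι)
    (hchain : ∀ i ∈ s, ∀ j ∈ s, Q i ≤ Q j ∨ Q j ≤ Q i) :
    (∑ i ∈ s, b i) ^ q ≤
      ENNReal.ofReal q * ∑ i ∈ s, b i * (∑ j ∈ s with Q j ≤ Q i, b j) ^ (q - 1) := by
  induction s using Finset.strongInduction with
  | H s ih =>
  rcases s.eq_empty_or_nonempty with rfl | hs
  · simp [ENNReal.zero_rpow_of_pos (by linarith : 0 < q)]
  -- peel off the largest element `m` of the chain
  obtain ⟨m, hm, hmax⟩ := s.exists_forall_le_of_chain Q hs hchain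
  have hsm : ∑ j ∈ s with Q j ≤ Q m, b j = ∑ j ∈ s, b j := by
    rw [Finset.filter_true_of_mem hmax]
  have hrest := ih (s.erase m) (Finset.erase_ssubset hm) fun i hi j hj =>
    hchain i (Finset.mem_of_mem_erase hi) j (Finset.mem_of_mem_erase hj)
  have hpeel := ENNReal.add_rpow_le_rpow_add_mul_rpow hq (∑ i ∈ s.erase m, b i) (b m)
  rw [Finset.sum_erase_add _ _ hm] at hpeel
  calc (∑ i ∈ s, b i) ^ q
      ≤ (∑ i ∈ s.erase m, b i) ^ q + ENNReal.ofReal q * b m * (∑ i ∈ s, b i) ^ (q - 1) := hpeel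
    _ ≤ ENNReal.ofReal q * ∑ i ∈ s.erase m, b i * (∑ j ∈ s with Q j ≤ Q i, b j) ^ (q - 1) +
        ENNReal.ofReal q * (b m * (∑ j ∈ s with Q j ≤ Q m, b j) ^ (q - 1)) := by
      rw [hsm, mul_assoc]
      gcongr
      refine hrest.trans ?_
      gcongr with i hi
      exact Finset.erase_subset m s
    _ = ENNReal.ofReal q * ∑ i ∈ s, b i * (∑ j ∈ s with Q j ≤ Q i, b j) ^ (q - 1) := by
      rw [← mul_add, Finset.sum_erase_add _ _ hm]

lemma Finset.sum_mul_sum_filter_comm {ι R : Type*} [CommSemiring R] (s : Finset ι)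
    (r : ι → ι → Prop) (f g : ι → R) :
    ∑ c ∈ s, f c * ∑ i ∈ s with r i c, g i = ∑ i ∈ s, g i * ∑ c ∈ s with r i c, f c := by
  simp_rw [Finset.mul_sum]
  exact Finset.sum_comm' (fun c i => by simp only [Finset.mem_filter]; tauto) |>.trans
    (Finset.sum_congr rfl fun _ _ => Finset.sum_congr rfl fun _ _ => mul_comm _ _)

lemma ENNReal.rpow_mul_rpow_one_sub_self (x : ℝ≥0∞) {α : ℝ} (hα0 : 0 ≤ α) (hα1 : α ≤ 1) :
    x ^ α * x ^ (1 - α) = x := by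
  rw [← ENNReal.rpow_add_of_nonneg _ _ hα0 (sub_nonneg.2 hα1), add_sub_cancel, ENNReal.rpow_one]

lemma ENNReal.self_mul_rpow_sub_one (x : ℝ≥0∞) {q : ℝ} (hq : 1 ≤ q) : x * x ^ (q - 1) = x ^ q := by
  conv_rhs => rw [← add_sub_cancel 1 q,
    ENNReal.rpow_add_of_nonneg _ _ zero_le_one (sub_nonneg.2 hq), ENNReal.rpow_one]

lemma ENNReal.mul_rpow_mul_mul_rpow_one_sub (x y z : ℝ≥0∞) {α : ℝ} (hα0 : 0 ≤ α) (hα1 : α ≤ 1) :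
    (x * y) ^ α * (x * z) ^ (1 - α) = x * (y ^ α * z ^ (1 - α)) := by
  rw [ENNReal.mul_rpow_of_nonneg _ _ hα0, ENNReal.mul_rpow_of_nonneg _ _ (sub_nonneg.2 hα1),
    mul_mul_mul_comm, x.rpow_mul_rpow_one_sub_self hα0 hα1]

lemma ENNReal.sum_rpow_mul_rpow_one_sub_le {ι : Type*} (s : Finset ι) (u v : ι → ℝ≥0∞) {α : ℝ}
    (hα0 : 0 < α) (hα1 : α ≤ 1) :
    ∑ i ∈ s, u i ^ α * v i ^ (1 - α) ≤ (∑ i ∈ s, u i) ^ α * (∑ i ∈ s, v i) ^ (1 - α) := by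
  rcases hα1.eq_or_lt with rfl | hα1
  · simp
  have hpq := Real.HolderConjugate.inv_inv hα0 (sub_pos.2 hα1) (add_sub_cancel α 1)
  refine (ENNReal.inner_le_Lp_mul_Lq s _ _ hpq).trans_eq ?_
  simp_rw [← ENNReal.rpow_mul, mul_inv_cancel₀ hα0.ne', mul_inv_cancel₀ (sub_pos.2 hα1).ne',
    ENNReal.rpow_one, one_div, inv_inv]

lemma ENNReal.le_rpow_inv_of_le_mul_rpow_one_sub {T B : ℝ≥0∞} {α : ℝ} (hα0 : 0 < α)
    (hα1 : α ≤ 1) (hT : T ≠ ∞) (h : T ≤ B * T ^ (1 - α)) : T ≤ B ^ α⁻¹ := by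
  rcases eq_or_ne T 0 with rfl | hT0
  · exact zero_le
  rw [ENNReal.le_rpow_inv_iff hα0, ← ENNReal.mul_le_mul_iff_left
    (ENNReal.rpow_pos (pos_iff_ne_zero.2 hT0) hT).ne'
    (ENNReal.rpow_ne_top_of_nonneg (sub_nonneg.2 hα1) hT),
    T.rpow_mul_rpow_one_sub_self hα0.le hα1]
  exact h

lemma ENNReal.rpow_mul_rpow_one_sub_eq_mul_div_rpow {A w : ℝ≥0∞} {β : ℝ} (hβ : 0 ≤ β)
    (hw0 : w ≠ 0) (hw : w ≠ ∞) : A ^ β * w ^ (1 - β) = w * (A / w) ^ β := by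
  rw [ENNReal.div_rpow_of_nonneg _ _ hβ, div_eq_mul_inv, ← ENNReal.rpow_neg, sub_eq_add_neg,
    ENNReal.rpow_add _ _ hw0 hw, ENNReal.rpow_one]
  ring

lemma lintegral_rpow_le_of_le_one {X : Type*} [MeasurableSpace X] {μ : Measure X}
    {f : X → ℝ≥0∞} (hf : AEMeasurable f μ) {β : ℝ} (hβ0 : 0 < β) (hβ1 : β ≤ 1) :
    ∫⁻ x, f x ^ β ∂μ ≤ (∫⁻ x, f x ∂μ) ^ β * μ Set.univ ^ (1 - β) := by
  rcases hβ1.eq_or_lt with rfl | hβ1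
  · simp
  have hpq := Real.HolderConjugate.inv_inv hβ0 (sub_pos.2 hβ1) (add_sub_cancel β 1)
  have := ENNReal.lintegral_mul_le_Lp_mul_Lq μ hpq (hf.pow_const β) aemeasurable_const
    (g := fun _ => 1)
  simp only [Pi.mul_apply, mul_one, ENNReal.one_rpow, lintegral_const, one_mul, one_div,
    inv_inv] at this
  simp_rw [← ENNReal.rpow_mul, mul_inv_cancel₀ hβ0.ne', ENNReal.rpow_one] at this
  exact this

lemma setLIntegral_rpow_le {X : Type*} [MeasurableSpace X] {μ : Measure X} {S : Set X}
    {f : X → ℝ≥0∞} (hf : AEMeasurable f (μ.restrict S)) (hS : μ S ≠ ∞) {β : ℝ} (hβ0 : 0 < β)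
    (hβ1 : β ≤ 1) :
    ∫⁻ x in S, f x ^ β ∂μ ≤ μ S * ((∫⁻ x in S, f x ∂μ) / μ S) ^ β := by
  rcases eq_or_ne (μ S) 0 with hS0 | hS0
  · simp [Measure.restrict_eq_zero.2 hS0]
  refine (lintegral_rpow_le_of_le_one hf hβ0 hβ1).trans_eq ?_
  rw [Measure.restrict_apply_univ,
    ENNReal.rpow_mul_rpow_one_sub_eq_mul_div_rpow hβ0.le hS0 hS]

lemma ceil_sub_two_toNat_bounds {q : ℝ} (hq : 1 < q) :
    q - 2 ≤ (⌈q - 2⌉.toNat : ℝ) ∧ (⌈q - 2⌉.toNat : ℝ) < q - 1 := by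
  have h0 : 0 ≤ ⌈q - 2⌉ := by
    have : (-1 : ℤ) < ⌈q - 2⌉ := Int.lt_ceil.2 (by push_cast; linarith)
    omega
  have hcast : ((⌈q - 2⌉.toNat : ℕ) : ℝ) = ((⌈q - 2⌉ : ℤ) : ℝ) := by
    exact_mod_cast Int.toNat_of_nonneg h0
  rw [hcast]
  exact ⟨Int.le_ceil _, by linarith [Int.ceil_lt_add_one (q - 2)]⟩

lemma covConst_eq {q : ℝ} (hq : 1 < q) :
    covConst q = (∏ j ∈ Finset.range (⌈q - 2⌉.toNat + 1), (q - j)) ^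
      ((q - 1) / (q - ⌈q - 2⌉.toNat - 1)) := by
  unfold covConst
  split_ifs with h
  · have : ⌈q - 2⌉.toNat = 0 := Int.toNat_eq_zero.2 (Int.ceil_le.2 (by push_cast; linarith))
    rw [this, zero_add, Finset.prod_range_one, Nat.cast_zero, sub_zero,
      div_self (by linarith : q - 1 ≠ 0), Real.rpow_one]
  · rfl

section LaminarFamily

variable {X ι : Type*}

def IsLaminar (s : Finset ι) (Q : ι → Set X) : Prop :=
  ∀ i ∈ s, ∀ j ∈ s, ∀ x ∈ Q i, x ∈ Q j → Q i ⊆ Q j ∨ Q j ⊆ Q i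

def nestedSum (s : Finset ι) (Q : ι → Set X) (a : ι → ℝ≥0∞) (x : X) : ℝ≥0∞ :=
  ∑ i ∈ s, (Q i).indicator (fun _ => a i) x

def descendantSum (s : Finset ι) (Q : ι → Set X) (a : ι → ℝ≥0∞) (c : ι) : X → ℝ≥0∞ :=
  nestedSum {j ∈ s | Q j ⊆ Q c} Q a

def ancestorWeight (s : Finset ι) (Q : ι → Set X) (a : ι → ℝ≥0∞) (c : ι) : ℝ≥0∞ :=
  ∑ j ∈ s with Q c ⊆ Q j, a j

variable {s : Finset ι} {Q : ι → Set X} {a : ι → ℝ≥0∞}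

lemma nestedSum_rpow_le (hQ : IsLaminar s Q) {u : Finset ι} (hu : u ⊆ s) {t : ℝ} (ht : 1 ≤ t)
    (x : X) :
    nestedSum u Q a x ^ t ≤ ENNReal.ofReal t *
      ∑ i ∈ u, (Q i).indicator (fun y => a i * descendantSum s Q a i y ^ (t - 1)) x := by
  have hchain : ∀ i ∈ {i ∈ u | x ∈ Q i}, ∀ j ∈ {i ∈ u | x ∈ Q i}, Q i ≤ Q j ∨ Q j ≤ Q i := by
    intro i hi j hj
    rw [Finset.mem_filter] at hi hj
    exact hQ i (hu hi.1) j (hu hj.1) x hi.2 hj.2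
  rw [nestedSum, Finset.sum_indicator_eq_sum_filter, Finset.sum_indicator_eq_sum_filter]
  refine (ENNReal.rpow_sum_le_of_chain Q ht a _ hchain).trans ?_
  gcongr with i hi
  rw [descendantSum, nestedSum, Finset.sum_indicator_eq_sum_filter, Finset.filter_filter,
    Finset.filter_filter]
  exact Finset.sum_le_sum_of_subset fun j hj => by
    simp only [Finset.mem_filter] at hj ⊢
    exact ⟨hu hj.1, hj.2.2, hj.2.1⟩

lemma ancestorWeight_le_nestedSum {c : ι} {x : X} (hx : x ∈ Q c) :
    ancestorWeight s Q a c ≤ nestedSum s Q a x := by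
  rw [ancestorWeight, nestedSum, Finset.sum_indicator_eq_sum_filter]
  exact Finset.sum_le_sum_of_subset
    (Finset.monotone_filter_right s fun j _ hcj => hcj hx)

lemma ancestorWeight_anti {i c : ι} (h : Q i ⊆ Q c) :
    ancestorWeight s Q a c ≤ ancestorWeight s Q a i :=
  Finset.sum_le_sum_of_subset (Finset.monotone_filter_right s fun _ _ hcj => h.trans hcj)

lemma sum_ancestors_mul_pow_le (i : ι) (m : ℕ) :
    ∑ c ∈ s with Q i ⊆ Q c, a c * ancestorWeight s Q a c ^ m ≤
      ancestorWeight s Q a i ^ (m + 1) :=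
  calc ∑ c ∈ s with Q i ⊆ Q c, a c * ancestorWeight s Q a c ^ m
      ≤ ∑ c ∈ s with Q i ⊆ Q c, a c * ancestorWeight s Q a i ^ m :=
        Finset.sum_le_sum fun c hc => by
          gcongr
          exact ancestorWeight_anti (Finset.mem_filter.1 hc).2
    _ = ancestorWeight s Q a i ^ (m + 1) := by rw [← Finset.sum_mul, pow_succ', ancestorWeight]

variable [MeasurableSpace X]

def descendantMass (s : Finset ι) (Q : ι → Set X) (a : ι → ℝ≥0∞) (ω : Measure X) (c : ι) :
    ℝ≥0∞ :=
  ∑ j ∈ s with Q j ⊆ Q c, a j * ω (Q j)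

-- With `a = fun Q => K Q * σ Q`, the part of `∫ W^q_{K,ω}[σ] dσ` coming from the cubes of `s`.
def wolffSum (s : Finset ι) (Q : ι → Set X) (a : ι → ℝ≥0∞) (ω : Measure X) (q : ℝ) : ℝ≥0∞ :=
  ∑ c ∈ s, a c * ω (Q c) * (descendantMass s Q a ω c / ω (Q c)) ^ (q - 1)

variable {ω : Measure X}

lemma measurable_nestedSum (hQm : ∀ i, MeasurableSet (Q i)) (u : Finset ι) :
    Measurable (nestedSum u Q a) :=
  Finset.measurable_fun_sum u fun i _ => measurable_const.indicator (hQm i)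

lemma setLIntegral_descendantSum (hQm : ∀ i, MeasurableSet (Q i)) (c : ι) :
    ∫⁻ x in Q c, descendantSum s Q a c x ∂ω = descendantMass s Q a ω c := by
  simp only [descendantSum, nestedSum]
  rw [lintegral_finsetSum _ fun j _ =>
    measurable_const.indicator (hQm j)]
  refine Finset.sum_congr rfl fun j hj => ?_
  rw [lintegral_indicator (hQm j), Measure.restrict_restrict (hQm j),
    Set.inter_eq_self_of_subset_left (Finset.mem_filter.1 hj).2, setLIntegral_const]

lemma lintegral_nestedSum_rpow_le (hQm : ∀ i, MeasurableSet (Q i)) (hQ : IsLaminar s Q)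
    {u : Finset ι} (hu : u ⊆ s) {t : ℝ} (ht : 1 ≤ t) :
    ∫⁻ x, nestedSum u Q a x ^ t ∂ω ≤
      ENNReal.ofReal t * ∑ i ∈ u, a i * ∫⁻ x in Q i, descendantSum s Q a i x ^ (t - 1) ∂ω := by
  have hg : ∀ i, Measurable fun y => descendantSum s Q a i y ^ (t - 1) :=
    fun i => (measurable_nestedSum hQm _).pow_const _
  have hmeas : ∀ i, Measurable fun y => a i * descendantSum s Q a i y ^ (t - 1) :=
    fun i => (hg i).const_mul _
  calc ∫⁻ x, nestedSum u Q a x ^ t ∂ω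
      ≤ ∫⁻ x, ENNReal.ofReal t *
          ∑ i ∈ u, (Q i).indicator (fun y => a i * descendantSum s Q a i y ^ (t - 1)) x ∂ω :=
        lintegral_mono (nestedSum_rpow_le hQ hu ht)
    _ = _ := by
      rw [lintegral_const_mul' _ _ ENNReal.ofReal_ne_top,
        lintegral_finsetSum _ fun i _ => (hmeas i).indicator (hQm i)]
      congr 1
      refine Finset.sum_congr rfl fun i _ => ?_
      rw [lintegral_indicator (hQm i), lintegral_const_mul _ (hg i)]

-- Iterating `lintegral_nestedSum_rpow_le` inside each cube: every step lowers the exponent of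
-- `descendantSum` by one and raises that of `ancestorWeight` by one.
lemma lintegral_nestedSum_rpow_le_prod (hQm : ∀ i, MeasurableSet (Q i)) (hQ : IsLaminar s Q)
    {q : ℝ} (m : ℕ) (hm : (m : ℝ) + 1 ≤ q) :
    ∫⁻ x, nestedSum s Q a x ^ q ∂ω ≤ (∏ j ∈ Finset.range (m + 1), ENNReal.ofReal (q - j)) *
      ∑ c ∈ s, a c * ancestorWeight s Q a c ^ m *
        ∫⁻ x in Q c, descendantSum s Q a c x ^ (q - (m + 1)) ∂ω := by
  induction m with
  | zero =>
    simpa using lintegral_nestedSum_rpow_le (ω := ω) (a := a) hQm hQ subset_rfl (t := q)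
      (by simpa using hm)
  | succ m ih =>
    push_cast at hm ⊢
    set P := ∏ j ∈ Finset.range (m + 1), ENNReal.ofReal (q - j)
    set J : ι → ℝ≥0∞ := fun i => ∫⁻ x in Q i, descendantSum s Q a i x ^ (q - (m + 1 + 1)) ∂ω
    have hlayer : ∀ c, ∫⁻ x in Q c, descendantSum s Q a c x ^ (q - (m + 1)) ∂ω ≤
        ENNReal.ofReal (q - (m + 1)) * ∑ i ∈ s with Q i ⊆ Q c, a i * J i := by
      intro c
      refine (lintegral_nestedSum_rpow_le (ω := ω.restrict (Q c)) hQm hQ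
        (Finset.filter_subset _ s) (t := q - (m + 1)) (by linarith)).trans_eq ?_
      congr 1
      refine Finset.sum_congr rfl fun i hi => ?_
      rw [Measure.restrict_restrict (hQm i),
        Set.inter_eq_self_of_subset_left (Finset.mem_filter.1 hi).2, sub_sub]
    calc ∫⁻ x, nestedSum s Q a x ^ q ∂ω
        ≤ P * ∑ c ∈ s, a c * ancestorWeight s Q a c ^ m *
            ∫⁻ x in Q c, descendantSum s Q a c x ^ (q - (m + 1)) ∂ω := ih (by linarith)
      _ ≤ P * ∑ c ∈ s, a c * ancestorWeight s Q a c ^ m *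
            (ENNReal.ofReal (q - (m + 1)) * ∑ i ∈ s with Q i ⊆ Q c, a i * J i) := by
        gcongr with c
        exact hlayer c
      _ = P * ENNReal.ofReal (q - (m + 1)) * ∑ i ∈ s, a i * J i *
            ∑ c ∈ s with Q i ⊆ Q c, a c * ancestorWeight s Q a c ^ m := by
        simp_rw [mul_left_comm _ (ENNReal.ofReal _), ← Finset.mul_sum,
          Finset.sum_mul_sum_filter_comm s (fun i c => Q i ⊆ Q c), mul_assoc]
      _ ≤ P * ENNReal.ofReal (q - (m + 1)) * ∑ i ∈ s, a i * J i *
            ancestorWeight s Q a i ^ (m + 1) := by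
        gcongr with i
        exact sum_ancestors_mul_pow_le i m
      _ = _ := by
        rw [Finset.prod_range_succ, Finset.mul_sum, Finset.mul_sum]
        push_cast
        refine Finset.sum_congr rfl fun i _ => ?_
        ring

lemma sum_mul_ancestorWeight_rpow_le_lintegral (hQm : ∀ i, MeasurableSet (Q i)) {q : ℝ}
    (hq : 1 ≤ q) :
    ∑ c ∈ s, a c * ω (Q c) * ancestorWeight s Q a c ^ (q - 1) ≤
      ∫⁻ x, nestedSum s Q a x ^ q ∂ω := by
  have hf : Measurable fun x => nestedSum s Q a x ^ (q - 1) :=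
    (measurable_nestedSum hQm s).pow_const _
  calc ∑ c ∈ s, a c * ω (Q c) * ancestorWeight s Q a c ^ (q - 1)
      = ∑ c ∈ s, a c * ∫⁻ _ in Q c, ancestorWeight s Q a c ^ (q - 1) ∂ω := by
        simp_rw [setLIntegral_const, mul_assoc, mul_comm (ω _)]
    _ ≤ ∑ c ∈ s, a c * ∫⁻ x in Q c, nestedSum s Q a x ^ (q - 1) ∂ω := by
        gcongr ∑ c ∈ s, a c * ?_ with c
        exact setLIntegral_mono hf fun x hx =>
          ENNReal.rpow_le_rpow (ancestorWeight_le_nestedSum hx) (by linarith)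
    _ = ∑ c ∈ s, ∫⁻ x, (Q c).indicator (fun _ => a c) x * nestedSum s Q a x ^ (q - 1) ∂ω := by
        refine Finset.sum_congr rfl fun c _ => ?_
        rw [← lintegral_const_mul _ hf, ← lintegral_indicator (hQm c)]
        congr with x
        exact Set.indicator_mul_left _ _ _
    _ = ∫⁻ x, ∑ c ∈ s, (Q c).indicator (fun _ => a c) x * nestedSum s Q a x ^ (q - 1) ∂ω :=
        (lintegral_finsetSum _ fun c _ => (measurable_const.indicator (hQm c)).mul hf).symm
    _ = ∫⁻ x, nestedSum s Q a x ^ q ∂ω := by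
        congr with x
        rw [← Finset.sum_mul]
        exact ENNReal.self_mul_rpow_sub_one _ hq

lemma lintegral_nestedSum_rpow_lt_top (hQm : ∀ i, MeasurableSet (Q i))
    (hω : ∀ i, ω (Q i) ≠ ∞) (ha : ∀ i ∈ s, ω (Q i) ≠ 0 → a i ≠ ∞) {q : ℝ} (hq : 0 < q) :
    ∫⁻ x, nestedSum s Q a x ^ q ∂ω < ∞ := by
  set s' := {i ∈ s | ω (Q i) ≠ 0}
  set U := ⋃ i ∈ s', Q i
  have hnull : ∀ᵐ x ∂ω, ∀ i ∈ s, x ∈ Q i → i ∈ s' :=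
    (Filter.eventually_all_finset s).2 fun i hi => by
      by_cases h : ω (Q i) = 0
      · filter_upwards [measure_eq_zero_iff_ae_notMem.1 h] with x hx using fun h' => absurd h' hx
      · exact Filter.Eventually.of_forall fun _ _ => Finset.mem_filter.2 ⟨hi, h⟩
  have hbound : ∀ᵐ x ∂ω, nestedSum s Q a x ^ q ≤ U.indicator (fun _ => (∑ i ∈ s', a i) ^ q) x := by
    filter_upwards [hnull] with x hx
    have hsub : {i ∈ s | x ∈ Q i} ⊆ s' := fun i hi =>
      hx i (Finset.mem_filter.1 hi).1 (Finset.mem_filter.1 hi).2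
    rw [nestedSum, Finset.sum_indicator_eq_sum_filter]
    by_cases hxU : x ∈ U
    · rw [Set.indicator_of_mem hxU]
      gcongr
    · have : {i ∈ s | x ∈ Q i} = ∅ := Finset.eq_empty_of_forall_notMem fun i hi =>
        hxU (Set.mem_biUnion (hsub hi) (Finset.mem_filter.1 hi).2)
      rw [this, Finset.sum_empty, ENNReal.zero_rpow_of_pos hq]
      exact zero_le
  refine (lintegral_mono_ae hbound).trans_lt ?_
  rw [lintegral_indicator (Finset.measurableSet_biUnion s' fun i _ => hQm i),
    setLIntegral_const]
  refine ENNReal.mul_lt_top (ENNReal.rpow_lt_top_of_nonneg hq.le ?_)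
    ((measure_biUnion_finset_le s' Q).trans_lt (ENNReal.sum_lt_top.2 fun i _ => (hω i).lt_top))
  exact ENNReal.sum_ne_top.2 fun i hi => ha i (Finset.mem_filter.1 hi).1 (Finset.mem_filter.1 hi).2

lemma wolffSum_eq_top (hω : ∀ i, ω (Q i) ≠ ∞) {q : ℝ} (hq : 1 < q) {c : ι} (hc : c ∈ s)
    (hac : a c = ∞) (hωc : ω (Q c) ≠ 0) : wolffSum s Q a ω q = ∞ := by
  have hA : descendantMass s Q a ω c = ∞ :=
    ENNReal.sum_eq_top.2 ⟨c, Finset.mem_filter.2 ⟨hc, subset_rfl⟩, by rw [hac, top_mul hωc]⟩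
  refine ENNReal.sum_eq_top.2 ⟨c, hc, ?_⟩
  rw [hA, ENNReal.top_div_of_ne_top (hω c), ENNReal.top_rpow_of_pos (by linarith), hac,
    top_mul hωc, top_mul top_ne_zero]

lemma lintegral_nestedSum_rpow_le_mul_rpow (hQm : ∀ i, MeasurableSet (Q i))
    (hQ : IsLaminar s Q) (hω : ∀ i, ω (Q i) ≠ ∞) {q : ℝ} (k : ℕ) (hk : q - 2 ≤ k)
    (hkq : (k : ℝ) < q - 1) :
    ∫⁻ x, nestedSum s Q a x ^ q ∂ω ≤
      (∏ j ∈ Finset.range (k + 1), ENNReal.ofReal (q - j)) *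
        wolffSum s Q a ω q ^ ((q - (k + 1)) / (q - 1)) *
          (∫⁻ x, nestedSum s Q a x ^ q ∂ω) ^ (1 - (q - (k + 1)) / (q - 1)) := by
  set β := q - (k + 1)
  set α := β / (q - 1)
  have hα0 : 0 < α := div_pos (by linarith) (by linarith)
  have hα1 : α ≤ 1 := (div_le_one (by linarith)).2 (by linarith)
  have hβ : (q - 1) * α = β := mul_div_cancel₀ _ (by linarith)
  have hk' : (q - 1) * (1 - α) = k := by rw [mul_sub, hβ]; ring
  set L := ancestorWeight s Q a
  set A := descendantMass s Q a ω
  -- each layer term is a geometric mean of a term of `wolffSum` and a term of the sum in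
  -- `sum_mul_ancestorWeight_rpow_le_lintegral`
  have hterm : ∀ c, a c * L c ^ k * ∫⁻ x in Q c, descendantSum s Q a c x ^ β ∂ω ≤
      (a c * ω (Q c) * (A c / ω (Q c)) ^ (q - 1)) ^ α *
        (a c * ω (Q c) * L c ^ (q - 1)) ^ (1 - α) := by
    intro c
    have hJ := setLIntegral_rpow_le (μ := ω) (S := Q c) (f := descendantSum s Q a c) (β := β)
      (measurable_nestedSum hQm _).aemeasurable (hω c) (by linarith) (by linarith)
    rw [setLIntegral_descendantSum hQm] at hJ
    calc a c * L c ^ k * ∫⁻ x in Q c, descendantSum s Q a c x ^ β ∂ω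
        ≤ a c * L c ^ k * (ω (Q c) * (A c / ω (Q c)) ^ β) := by gcongr
      _ = _ := by
        rw [ENNReal.mul_rpow_mul_mul_rpow_one_sub _ _ _ hα0.le hα1, ← ENNReal.rpow_mul,
          ← ENNReal.rpow_mul, hβ, hk', ENNReal.rpow_natCast]
        ring
  calc ∫⁻ x, nestedSum s Q a x ^ q ∂ω
      ≤ (∏ j ∈ Finset.range (k + 1), ENNReal.ofReal (q - j)) *
          ∑ c ∈ s, a c * L c ^ k * ∫⁻ x in Q c, descendantSum s Q a c x ^ β ∂ω :=
        lintegral_nestedSum_rpow_le_prod hQm hQ k (by linarith)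
    _ ≤ (∏ j ∈ Finset.range (k + 1), ENNReal.ofReal (q - j)) *
          (wolffSum s Q a ω q ^ α * (∑ c ∈ s, a c * ω (Q c) * L c ^ (q - 1)) ^ (1 - α)) := by
        gcongr
        exact (Finset.sum_le_sum fun c _ => hterm c).trans
          (ENNReal.sum_rpow_mul_rpow_one_sub_le _ _ _ hα0 hα1)
    _ ≤ _ := by
        rw [mul_assoc]
        gcongr
        exact sum_mul_ancestorWeight_rpow_le_lintegral hQm (by linarith)

theorem lintegral_nestedSum_rpow_le_wolffSum (hQm : ∀ i, MeasurableSet (Q i))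
    (hQ : IsLaminar s Q) (hω : ∀ i, ω (Q i) ≠ ∞) {q : ℝ} (k : ℕ) (hk : q - 2 ≤ k)
    (hkq : (k : ℝ) < q - 1) :
    ∫⁻ x, nestedSum s Q a x ^ q ∂ω ≤
      ENNReal.ofReal ((∏ j ∈ Finset.range (k + 1), (q - j)) ^ ((q - 1) / (q - k - 1))) *
        wolffSum s Q a ω q := by
  have hq : 1 < q := by linarith [(Nat.cast_nonneg k : (0 : ℝ) ≤ k)]
  have hpos : ∀ j ∈ Finset.range (k + 1), 0 < q - j := fun j hj => by
    have : (j : ℝ) ≤ k := by exact_mod_cast Finset.mem_range_succ_iff.1 hj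
    linarith
  have hprod : 0 < ∏ j ∈ Finset.range (k + 1), (q - j) := Finset.prod_pos hpos
  by_cases hinf : ∃ c ∈ s, a c = ∞ ∧ ω (Q c) ≠ 0
  · obtain ⟨c, hc, hac, hωc⟩ := hinf
    rw [wolffSum_eq_top hω hq hc hac hωc, ENNReal.mul_top]
    · exact le_top
    · exact (ENNReal.ofReal_pos.2 (Real.rpow_pos_of_pos hprod _)).ne'
  push Not at hinf
  have hα0 : 0 < (q - (k + 1)) / (q - 1) := div_pos (by linarith) (by linarith)
  have hT := lintegral_nestedSum_rpow_lt_top (a := a) (q := q) hQm hω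
    (fun i hi hωi hai => hωi (hinf i hi hai)) (by linarith)
  refine (ENNReal.le_rpow_inv_of_le_mul_rpow_one_sub hα0 ((div_le_one (by linarith)).2
    (by linarith)) hT.ne (lintegral_nestedSum_rpow_le_mul_rpow hQm hQ hω k hk hkq)).trans_eq ?_
  rw [ENNReal.mul_rpow_of_nonneg _ _ (inv_nonneg.2 hα0.le), ← ENNReal.rpow_mul,
    mul_inv_cancel₀ hα0.ne', ENNReal.rpow_one, ← ENNReal.ofReal_prod_of_nonneg fun j hj =>
    (hpos j hj).le, ENNReal.ofReal_rpow_of_nonneg hprod.le (inv_nonneg.2 hα0.le), inv_div]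
  congr 3
  ring

theorem lintegral_nestedSum_rpow_le_covConst (hQm : ∀ i, MeasurableSet (Q i))
    (hQ : IsLaminar s Q) (hω : ∀ i, ω (Q i) ≠ ∞) {q : ℝ} (hq : 1 < q) :
    ∫⁻ x, nestedSum s Q a x ^ q ∂ω ≤ ENNReal.ofReal (covConst q) * wolffSum s Q a ω q := by
  obtain ⟨hk, hkq⟩ := ceil_sub_two_toNat_bounds hq
  rw [covConst_eq hq]
  exact lintegral_nestedSum_rpow_le_wolffSum hQm hQ hω _ hk hkq

end LaminarFamily

lemma mem_dyadicCube_iff {n : ℕ} {i : ℤ} {k : Fin n → ℤ} {x : Fin n → ℝ} :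
    x ∈ dyadicCube n i k ↔ ∀ j, ⌊x j * 2 ^ i⌋ = k j := by
  have h : (0 : ℝ) < 2 ^ i := zpow_pos two_pos i
  simp only [dyadicCube, Set.mem_ofPred_eq, Int.floor_eq_iff, zpow_neg, ← div_eq_mul_inv,
    div_le_iff₀ h, lt_div_iff₀ h]

lemma floor_mul_two_zpow_of_le {i i' : ℤ} (h : i' ≤ i) (t : ℝ) :
    ⌊t * 2 ^ i'⌋ = ⌊t * 2 ^ i⌋ / ((2 ^ (i - i').toNat : ℕ) : ℤ) := by
  have h2 : ((2 ^ (i - i').toNat : ℕ) : ℝ) = 2 ^ (i - i') := by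
    rw [Nat.cast_pow, Nat.cast_ofNat, ← zpow_natCast, Int.toNat_of_nonneg (by omega)]
  rw [← Int.floor_div_natCast, h2, mul_div_assoc, ← zpow_sub₀ two_ne_zero,
    show i - (i - i') = i' by omega]

lemma dyadicCube_subset_of_le {n : ℕ} {i i' : ℤ} {k k' : Fin n → ℤ} {x : Fin n → ℝ}
    (h : i' ≤ i) (hx : x ∈ dyadicCube n i k) (hx' : x ∈ dyadicCube n i' k') :
    dyadicCube n i k ⊆ dyadicCube n i' k' := by
  intro y hy
  rw [mem_dyadicCube_iff] at hx hx' hy ⊢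
  intro j
  rw [floor_mul_two_zpow_of_le h, hy j, ← hx j, ← floor_mul_two_zpow_of_le h, hx' j]

lemma dyadicCube_subset_or_subset {n : ℕ} {i i' : ℤ} {k k' : Fin n → ℤ} {x : Fin n → ℝ}
    (hx : x ∈ dyadicCube n i k) (hx' : x ∈ dyadicCube n i' k') :
    dyadicCube n i k ⊆ dyadicCube n i' k' ∨ dyadicCube n i' k' ⊆ dyadicCube n i k :=
  (le_total i' i).imp (fun h => dyadicCube_subset_of_le h hx hx')
    (fun h => dyadicCube_subset_of_le h hx' hx)

lemma measurableSet_dyadicCube (n : ℕ) (i : ℤ) (k : Fin n → ℤ) :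
    MeasurableSet (dyadicCube n i k) := by
  simp only [dyadicCube, Set.ofPred_forall]
  exact MeasurableSet.iInter fun j =>
    (measurableSet_le measurable_const (measurable_pi_apply j)).inter
      (measurableSet_lt (measurable_pi_apply j) measurable_const)

lemma measure_dyadicCube_lt_top {n : ℕ} (μ : Measure (Fin n → ℝ)) [IsLocallyFiniteMeasure μ]
    (i : ℤ) (k : Fin n → ℤ) : μ (dyadicCube n i k) < ∞ :=
  measure_lt_top_of_subset (s := Set.Icc (fun j => (k j : ℝ) * 2 ^ (-i))
      (fun j => ((k j : ℝ) + 1) * 2 ^ (-i)))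
    (fun _ hx => ⟨fun j => (hx j).1, fun j => (hx j).2.le⟩) isCompact_Icc.measure_lt_top.ne

lemma measurableSet_cube (n : ℕ) (P : ℤ × (Fin n → ℤ)) : MeasurableSet (cube n P) :=
  measurableSet_dyadicCube n P.1 P.2

lemma measure_cube_lt_top {n : ℕ} (μ : Measure (Fin n → ℝ)) [IsLocallyFiniteMeasure μ]
    (P : ℤ × (Fin n → ℤ)) : μ (cube n P) < ∞ :=
  measure_dyadicCube_lt_top μ P.1 P.2

lemma isLaminar_cube (n : ℕ) (s : Finset (ℤ × (Fin n → ℤ))) : IsLaminar s (cube n) :=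
  fun _ _ _ _ _ hx hx' => dyadicCube_subset_or_subset hx hx'

lemma tsum_cube_subset_eq_nestedSum {n : ℕ} {K : ℤ × (Fin n → ℤ) → ℝ≥0∞}
    (hK : (Function.support K).Finite) (σ : Measure (Fin n → ℝ)) (F : Set (Fin n → ℝ))
    (x : Fin n → ℝ) :
    ∑' P : {P : ℤ × (Fin n → ℤ) // cube n P ⊆ F},
        (cube n (P : ℤ × (Fin n → ℤ))).indicator (fun _ => K P * σ (cube n P)) x =
      nestedSum {P ∈ hK.toFinset | cube n P ⊆ F} (cube n) (fun P => K P * σ (cube n P)) x := by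
  refine (tsum_subtype {P | cube n P ⊆ F}
    fun P => (cube n P).indicator (fun _ => K P * σ (cube n P)) x).trans ?_
  rw [tsum_eq_sum (s := hK.toFinset), nestedSum, Finset.sum_filter]
  · rfl
  · intro P hP
    simp_all

lemma wolffSum_le_setLIntegral_wolffPot {n : ℕ} {K : ℤ × (Fin n → ℤ) → ℝ≥0∞}
    (hK : (Function.support K).Finite) (σ ω : Measure (Fin n → ℝ)) {q : ℝ} (hq : 1 ≤ q)
    (F : Set (Fin n → ℝ)) :
    wolffSum {P ∈ hK.toFinset | cube n P ⊆ F} (cube n) (fun P => K P * σ (cube n P)) ω q ≤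
      ∫⁻ y in F, wolffPot n K ω σ q y ∂σ := by
  have hAB : ∀ P, descendantMass {P ∈ hK.toFinset | cube n P ⊆ F} (cube n)
      (fun P => K P * σ (cube n P)) ω P ≤ ∑' P' : ℤ × (Fin n → ℤ),
        if cube n P' ⊆ cube n P then K P' * ω (cube n P') * σ (cube n P') else 0 := by
    intro P
    rw [descendantMass, Finset.sum_filter]
    refine (Finset.sum_le_sum fun P' _ => ?_).trans (ENNReal.sum_le_tsum _)
    split_ifs
    · rw [mul_right_comm]
    · rfl
  unfold wolffPot
  rw [lintegral_tsum fun P => (measurable_const.indicator (measurableSet_cube n P)).aemeasurable]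
  refine (Finset.sum_le_sum fun P hP => ?_).trans (ENNReal.sum_le_tsum _)
  rw [lintegral_indicator_const (measurableSet_cube n P),
    Measure.restrict_apply (measurableSet_cube n P),
    Set.inter_eq_self_of_subset_left (Finset.mem_filter.1 hP).2, mul_right_comm (K P),
    mul_right_comm _ (σ _)]
  gcongr
  exact hAB P

theorem setLIntegral_sum_cubes_rpow_le {n : ℕ} (σ ω : Measure (Fin n → ℝ))
    [IsLocallyFiniteMeasure ω] {K : ℤ × (Fin n → ℤ) → ℝ≥0∞} (hK : (Function.support K).Finite)
    (F : Set (Fin n → ℝ)) {q : ℝ} (hq : 1 < q) :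
    ∫⁻ x in F, (∑' P : {P : ℤ × (Fin n → ℤ) // cube n P ⊆ F},
        (cube n (P : ℤ × (Fin n → ℤ))).indicator (fun _ => K P * σ (cube n P)) x) ^ q ∂ω ≤
      ENNReal.ofReal (covConst q) * ∫⁻ y in F, wolffPot n K ω σ q y ∂σ := by
  simp only [tsum_cube_subset_eq_nestedSum hK σ F]
  refine (setLIntegral_le_lintegral _ _).trans ?_
  refine (lintegral_nestedSum_rpow_le_covConst (measurableSet_cube n)
    (isLaminar_cube n _) (fun P => (measure_cube_lt_top ω P).ne) hq).trans ?_
  gcongr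
  exact wolffSum_le_setLIntegral_wolffPot hK σ ω hq.le F

lemma setLAverage_le_dyadicMaximal {n : ℕ} (σ : Measure (Fin n → ℝ))
    (h : (Fin n → ℝ) → ℝ≥0∞) {i : ℤ} {k : Fin n → ℤ} {x : Fin n → ℝ}
    (hx : x ∈ dyadicCube n i k) :
    (∫⁻ y in dyadicCube n i k, h y ∂σ) / σ (dyadicCube n i k) ≤ dyadicMaximal σ h x :=
  le_iSup_of_le i (le_iSup_of_le k (le_iSup_of_le hx le_rfl))

lemma rpow_setLAverage_mul_le_setLIntegral_dyadicMaximal {n : ℕ} (σ : Measure (Fin n → ℝ))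
    (h : (Fin n → ℝ) → ℝ≥0∞) {i : ℤ} {k : Fin n → ℤ} {E : Set (Fin n → ℝ)}
    (hE : E ⊆ dyadicCube n i k) (hEm : MeasurableSet E) (hcar : σ (dyadicCube n i k) ≤ 2 * σ E)
    {t : ℝ} (ht : 0 ≤ t) :
    ((∫⁻ y in dyadicCube n i k, h y ∂σ) / σ (dyadicCube n i k)) ^ t * σ (dyadicCube n i k) ≤
      2 * ∫⁻ x in E, dyadicMaximal σ h x ^ t ∂σ :=
  calc ((∫⁻ y in dyadicCube n i k, h y ∂σ) / σ (dyadicCube n i k)) ^ t * σ (dyadicCube n i k)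
      ≤ ((∫⁻ y in dyadicCube n i k, h y ∂σ) / σ (dyadicCube n i k)) ^ t * (2 * σ E) := by
        gcongr
    _ = 2 * ∫⁻ _ in E, ((∫⁻ y in dyadicCube n i k, h y ∂σ) / σ (dyadicCube n i k)) ^ t ∂σ := by
        rw [setLIntegral_const]
        ring
    _ ≤ 2 * ∫⁻ x in E, dyadicMaximal σ h x ^ t ∂σ := by
        gcongr 2 * ?_
        exact setLIntegral_mono' hEm fun x hx =>
          ENNReal.rpow_le_rpow (setLAverage_le_dyadicMaximal σ h (hE hx)) ht

lemma ENNReal.rpow_inv_mul_rpow_rpow_eq {p q r : ℝ} (hq : 0 < q) (hr : 0 < r)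
    (hpqr : 1 / q = 1 / r + 1 / p) {x : ℝ≥0∞} (y : ℝ≥0∞) (hx0 : x ≠ 0) (hx : x ≠ ∞) :
    ((x ^ (1 / p))⁻¹ * y ^ (1 / q)) ^ r = (y / x) ^ (r / q) * x := by
  have hexp : -(r / p) = -(r / q) + 1 := by
    have : r * (1 / q) = r * (1 / r) + r * (1 / p) := by rw [hpqr, mul_add]
    rw [mul_one_div, mul_one_div, mul_one_div, div_self hr.ne'] at this
    linarith
  calc ((x ^ (1 / p))⁻¹ * y ^ (1 / q)) ^ r = x ^ (-(r / p)) * y ^ (r / q) := by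
        rw [ENNReal.mul_rpow_of_nonneg _ _ hr.le, ENNReal.inv_rpow, ← ENNReal.rpow_mul,
          ← ENNReal.rpow_mul, ← ENNReal.rpow_neg, one_div_mul_eq_div, one_div_mul_eq_div]
    _ = (y / x) ^ (r / q) * x := by
        rw [hexp, ENNReal.rpow_add _ _ hx0 hx, ENNReal.rpow_one,
          ENNReal.div_rpow_of_nonneg _ _ (div_nonneg hr.le hq.le), ENNReal.div_eq_inv_mul,
          ← ENNReal.rpow_neg]
        ring

theorem principal_cube_wolff_estimate (n : ℕ) (σ ω : Measure (Fin n → ℝ))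
    [IsLocallyFiniteMeasure σ] [IsLocallyFiniteMeasure ω]
    (p q r : ℝ) (hq : 1 < q) (hqp : q < p) (hr : 1 / q = 1 / r + 1 / p)
    (K : ℤ × (Fin n → ℤ) → ℝ≥0∞) (hKfin : (Function.support K).Finite)
    (F : Set (Fin n → ℝ)) (hF : IsDyadicCube n F)
    (E : Set (Fin n → ℝ)) (hEsub : E ⊆ F) (hEmeas : MeasurableSet E)
    (hcar : σ F ≤ 2 * σ E) :
    ((σ F ^ (1 / p))⁻¹ *
        (∫⁻ x in F, (∑' P : {P : ℤ × (Fin n → ℤ) // cube n P ⊆ F},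
          (cube n (P : ℤ × (Fin n → ℤ))).indicator
            (fun _ => K P * σ (cube n (P : ℤ × (Fin n → ℤ)))) x) ^ q ∂ω) ^ (1 / q)) ^ r ≤
      2 * ENNReal.ofReal (covConst q) ^ (r / q) *
        ∫⁻ x in E, dyadicMaximal σ (wolffPot n K ω σ q) x ^ (r / q) ∂σ := by
  obtain ⟨i, k, rfl⟩ := hF
  have hr0 : 0 < r := one_div_pos.1 (by linarith [one_div_lt_one_div_of_lt (by linarith) hqp])
  have hrq : 0 ≤ r / q := by positivity
  rcases eq_or_ne (σ (dyadicCube n i k)) 0 with hσ0 | hσ0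
  · have hnull : ∀ P : {P : ℤ × (Fin n → ℤ) // cube n P ⊆ dyadicCube n i k},
        σ (cube n P) = 0 := fun P => measure_mono_null P.2 hσ0
    simp [hnull, hσ0, ENNReal.zero_rpow_of_pos, hr0, (by linarith : 0 < q), (by linarith : 0 < p)]
  rw [ENNReal.rpow_inv_mul_rpow_rpow_eq (by linarith) hr0 hr _ hσ0
    (measure_dyadicCube_lt_top σ i k).ne]
  calc _ ≤ (ENNReal.ofReal (covConst q) * (∫⁻ y in dyadicCube n i k, wolffPot n K ω σ q y ∂σ) /
          σ (dyadicCube n i k)) ^ (r / q) * σ (dyadicCube n i k) := by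
        gcongr
        exact setLIntegral_sum_cubes_rpow_le σ ω hKfin _ hq
    _ = ENNReal.ofReal (covConst q) ^ (r / q) *
          (((∫⁻ y in dyadicCube n i k, wolffPot n K ω σ q y ∂σ) / σ (dyadicCube n i k)) ^ (r / q) *
            σ (dyadicCube n i k)) := by
        rw [mul_div_assoc, ENNReal.mul_rpow_of_nonneg _ _ hrq, mul_assoc]
    _ ≤ ENNReal.ofReal (covConst q) ^ (r / q) *
          (2 * ∫⁻ x in E, dyadicMaximal σ (wolffPot n K ω σ q) x ^ (r / q) ∂σ) := by
        gcongr ENNReal.ofReal (covConst q) ^ (r / q) * ?_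
        exact rpow_setLAverage_mul_le_setLIntegral_dyadicMaximal σ _ hEsub hEmeas hcar hrq
    _ = _ := by ring

end
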